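/- Let 𝒢_n be a simple, verbose ψ-reduction grammar, let φ = λ(T[⇑(S)]) be the template corresponding to the (Lambda) rewriting rule, and let Δ_φ^n be the set of φ-matchings of 𝒢_n. Then a λυ-term t = (λa)[s][s_1]⋯[s_w] satisfies t ↓_{n+1} if and only if there exists a unique term π = (λ(α[⇑(σ)]))[σ_1]⋯[σ_w] ∈ Δ_φ^n such that t ∈ L((λα)[σ][σ_1]⋯[σ_w]). -/

import Mathlib

mutual
/-- λυ-terms in de Bruijn notation, with explicit closures. -/
inductive LTerm : Type
  | idx : Nat → LTerm
  | lam : LTerm → LTerm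
  | app : LTerm → LTerm → LTerm
  | clos : LTerm → LSub → LTerm
  deriving DecidableEq

/-- explicit λυ-substitutions. -/
inductive LSub : Type
  | slash : LTerm → LSub
  | lift : LSub → LSub
  | shift : LSub
  deriving DecidableEq
end

mutual
/-- natural size of a λυ-term: the number of constructors (|idx n| = n+1). -/
def LTerm.size : LTerm → Nat
  | .idx n => n + 1
  | .lam a => 1 + a.size
  | .app a b => 1 + a.size + b.size
  | .clos a s => 1 + a.size + s.size

/-- natural size of a substitution. -/
def LSub.size : LSub → Nat
  | .slash a => 1 + a.size
  | .lift s => 1 + s.size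
  | .shift => 1
end

/-- a λυ-term is pure if it contains no closure; pure terms are exactly the ψ-normal forms. -/
def LTerm.IsPure : LTerm → Prop
  | .idx _ => True
  | .lam a => a.IsPure
  | .app a b => a.IsPure ∧ b.IsPure
  | .clos _ _ => False

/-- one normal-order (leftmost-outermost) ψ-reduction step. -/
inductive NStep : LTerm → LTerm → Prop
  /-- (App) (ab)[s] → a[s](b[s]) -/
  | appS (a b : LTerm) (s : LSub) :
      NStep (.clos (.app a b) s) (.app (.clos a s) (.clos b s))
  /-- (Lambda) (λa)[s] → λ(a[⇑(s)]) -/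
  | lamS (a : LTerm) (s : LSub) :
      NStep (.clos (.lam a) s) (.lam (.clos a (.lift s)))
  /-- (FVar) 0[a/] → a -/
  | fvar (a : LTerm) : NStep (.clos (.idx 0) (.slash a)) a
  /-- (RVar) (S n)[a/] → n -/
  | rvar (n : Nat) (a : LTerm) : NStep (.clos (.idx (n+1)) (.slash a)) (.idx n)
  /-- (FVarLift) 0[⇑(s)] → 0 -/
  | fvarLift (s : LSub) : NStep (.clos (.idx 0) (.lift s)) (.idx 0)
  /-- (RVarLift) (S n)[⇑(s)] → n[s][↑] -/
  | rvarLift (n : Nat) (s : LSub) :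
      NStep (.clos (.idx (n+1)) (.lift s)) (.clos (.clos (.idx n) s) .shift)
  /-- (VarShift) n[↑] → S n -/
  | varShift (n : Nat) : NStep (.clos (.idx n) .shift) (.idx (n+1))
  /-- reduce under an abstraction -/
  | lamCong {a a' : LTerm} : NStep a a' → NStep (.lam a) (.lam a')
  /-- reduce in the left part of an application -/
  | appLeft {a a' : LTerm} (b : LTerm) : NStep a a' → NStep (.app a b) (.app a' b)
  /-- reduce in the right part of an application, provided the left part is normal -/
  | appRight {b b' : LTerm} (a : LTerm) :
      a.IsPure → NStep b b' → NStep (.app a b) (.app a b')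
  /-- reduce in the body of a closure, provided the closure is not itself a ψ-redex,
      i.e. its body is again a closure -/
  | closCong {t t' : LTerm} (s : LSub) :
      (∃ u v, t = LTerm.clos u v) → NStep t t' → NStep (.clos t s) (.clos t' s)

/-- `NormIn t k` : `t` reaches its ψ-normal form in exactly `k` normal-order
ψ-reduction steps (written t ↓_k). -/
inductive NormIn : LTerm → Nat → Prop
  | base {t : LTerm} : t.IsPure → NormIn t 0
  | step {t t' : LTerm} {k : Nat} : NStep t t' → NormIn t' k → NormIn t (k+1)

/-! ## Regular tree grammars over the λυ signature -/

/-- terms over the ranked alphabet of λυ (terminal symbols 0, S, λ, application,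
closure, slash, lift, shift) with variables (non-terminals) in `V`.
Ground terms are `GTerm Empty`. -/
inductive GTerm (V : Type) : Type
  | var : V → GTerm V
  | zero : GTerm V
  | succ : GTerm V → GTerm V
  | lam : GTerm V → GTerm V
  | app : GTerm V → GTerm V → GTerm V
  | clos : GTerm V → GTerm V → GTerm V
  | slash : GTerm V → GTerm V
  | lift : GTerm V → GTerm V
  | shift : GTerm V
  deriving DecidableEq

/-- `Gen P α t` : the ground term `t` is derivable from the term `α` in the
regular tree grammar with production function `P`. -/
inductive Gen {V : Type} (P : V → Set (GTerm V)) : GTerm V → GTerm Empty → Prop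
  | var {X : V} {γ : GTerm V} {t : GTerm Empty} :
      γ ∈ P X → Gen P γ t → Gen P (.var X) t
  | zero : Gen P .zero .zero
  | succ {a t} : Gen P a t → Gen P (.succ a) (.succ t)
  | lam {a t} : Gen P a t → Gen P (.lam a) (.lam t)
  | app {a b t u} : Gen P a t → Gen P b u → Gen P (.app a b) (.app t u)
  | clos {a b t u} : Gen P a t → Gen P b u → Gen P (.clos a b) (.clos t u)
  | slash {a t} : Gen P a t → Gen P (.slash a) (.slash t)
  | lift {a t} : Gen P a t → Gen P (.lift a) (.lift t)
  | shift : Gen P .shift .shift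

/-- the language generated by a term `α` in the grammar with productions `P`. -/
def Lang {V : Type} (P : V → Set (GTerm V)) (α : GTerm V) : Set (GTerm Empty) :=
  {t | Gen P α t}

/-- derivations (parse trees) of a ground term from a term `α`; a grammar is
unambiguous when such derivations are unique. -/
inductive Parse {V : Type} (P : V → Set (GTerm V)) : GTerm V → GTerm Empty → Type
  | var {X : V} {γ : GTerm V} {t : GTerm Empty} :
      γ ∈ P X → Parse P γ t → Parse P (.var X) t
  | zero : Parse P .zero .zero
  | succ {a t} : Parse P a t → Parse P (.succ a) (.succ t)
  | lam {a t} : Parse P a t → Parse P (.lam a) (.lam t)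
  | app {a b t u} : Parse P a t → Parse P b u → Parse P (.app a b) (.app t u)
  | clos {a b t u} : Parse P a t → Parse P b u → Parse P (.clos a b) (.clos t u)
  | slash {a t} : Parse P a t → Parse P (.slash a) (.slash t)
  | lift {a t} : Parse P a t → Parse P (.lift a) (.lift t)
  | shift : Parse P .shift .shift

/-- a non-terminal `X` is unambiguous if every ground term admits at most one
derivation sequence (equivalently, parse tree) from `X`. -/
def Unambiguous {V : Type} (P : V → Set (GTerm V)) (X : V) : Prop :=
  ∀ t : GTerm Empty, Subsingleton (Parse P (.var X) t)

/-- `Occurs X α` : the non-terminal `X` occurs in the term `α`. -/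
def Occurs {V : Type} (X : V) : GTerm V → Prop
  | .var Y => X = Y
  | .zero => False
  | .succ a => Occurs X a
  | .lam a => Occurs X a
  | .app a b => Occurs X a ∨ Occurs X b
  | .clos a b => Occurs X a ∨ Occurs X b
  | .slash a => Occurs X a
  | .lift a => Occurs X a
  | .shift => False

/-- the head of a term `χ[σ_1]⋯[σ_w]` of closure width `w`, namely `χ`. -/
def headOf {V : Type} : GTerm V → GTerm V
  | .clos a _ => headOf a
  | t => t

/-- the closure width of a term: the largest `w` such that the term has the
form `χ[σ_1]⋯[σ_w]`. -/
def closWidth {V : Type} : GTerm V → Nat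
  | .clos a _ => closWidth a + 1
  | _ => 0

/-- a regular tree grammar over the λυ terminal alphabet, with non-terminals
`V`, axiom `ax` and a finite set of productions for each non-terminal. -/
structure RTG (V : Type) where
  ax : V
  prods : V → Set (GTerm V)
  prods_fin : ∀ X, (prods X).Finite

/-- non-terminal symbols of the ψ-reduction grammar 𝒢_n : the standard
non-terminals T, S, N of the grammar Λ of λυ-terms, plus G_0, …, G_n. -/
inductive NT (n : Nat) : Type
  | T : NT n
  | S : NT n
  | N : NT n
  | G : Fin (n+1) → NT n
  deriving DecidableEq

/-- the productions of the standard regular tree grammar Λ of λυ-terms: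
T → N | λT | T T | T[S],  S → T/ | ⇑(S) | ↑,  N → 0 | S N. -/
def lamProds {n : Nat} : NT n → Set (GTerm (NT n))
  | .T => {GTerm.var (NT.N), GTerm.lam (.var .T), GTerm.app (.var .T) (.var .T),
           GTerm.clos (.var .T) (.var .S)}
  | .S => {GTerm.slash (.var .T), GTerm.lift (.var .S), GTerm.shift}
  | .N => {GTerm.zero, GTerm.succ (.var .N)}
  | .G _ => ∅

/-- encoding of de Bruijn indices as ground terms. -/
def encIdx : Nat → GTerm Empty
  | 0 => .zero
  | n+1 => .succ (encIdx n)

mutual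
/-- encoding of λυ-terms as ground terms over the λυ alphabet. -/
def encT : LTerm → GTerm Empty
  | .idx n => encIdx n
  | .lam a => .lam (encT a)
  | .app a b => .app (encT a) (encT b)
  | .clos a s => .clos (encT a) (encS s)

/-- encoding of λυ-substitutions as ground terms over the λυ alphabet. -/
def encS : LSub → GTerm Empty
  | .slash a => .slash (encT a)
  | .lift s => .lift (encS s)
  | .shift => .shift
end

/-- `IsRG n G` : `G` is a ψ-reduction grammar 𝒢_n : a regular tree grammar
over the λυ alphabet with non-terminals T, S, N, G_0, …, G_n, whose axiom is
G_n, whose productions include those of the grammar Λ of λυ-terms, and such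
that each G_k is unambiguous and generates exactly the (encodings of) λυ-terms
ψ-normalising in k normal-order ψ-reduction steps. -/
structure IsRG (n : Nat) (G : RTG (NT n)) : Prop where
  ax_eq : G.ax = NT.G (Fin.last n)
  lambda_sub : ∀ X : NT n, lamProds X ⊆ G.prods X
  unamb : ∀ k : Fin (n+1), Unambiguous G.prods (NT.G k)
  lang : ∀ k : Fin (n+1),
    Lang G.prods (.var (NT.G k)) = {g | ∃ t : LTerm, NormIn t k ∧ encT t = g}

/-- `IsSimple n G` : the ψ-reduction grammar is simple: every self-referencing
production is a production of Λ or has one of the forms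
G_k → λG_k | G_0 G_k | G_k G_0, and every regular (non-self-referencing)
production G_k → α references only the non-terminals T, S, N, G_0, …, G_{k−1}. -/
structure IsSimple (n : Nat) (G : RTG (NT n)) : Prop where
  selfref : ∀ (X : NT n) (α : GTerm (NT n)), α ∈ G.prods X → Occurs X α →
    α ∈ lamProds X ∨
      ∃ k : Fin (n+1), X = NT.G k ∧
        (α = .lam (.var X) ∨ α = .app (.var (NT.G 0)) (.var X) ∨
          α = .app (.var X) (.var (NT.G 0)))
  regular : ∀ (k : Fin (n+1)) (α : GTerm (NT n)),
    α ∈ G.prods (NT.G k) → ¬ Occurs (NT.G k) α →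
      ∀ Y : NT n, Occurs Y α →
        Y = NT.T ∨ Y = NT.S ∨ Y = NT.N ∨ ∃ j : Fin (n+1), Y = NT.G j ∧ (j : ℕ) < (k : ℕ)

/-- `IsVerbose G` : no production has the form X → G_k[σ_1]⋯[σ_w]. -/
def IsVerbose {n : Nat} (G : RTG (NT n)) : Prop :=
  ∀ (X : NT n) (α : GTerm (NT n)), α ∈ G.prods X →
    ∀ k : Fin (n+1), headOf α ≠ .var (NT.G k)

/-- `IsFIP P Π α β` : `Π` is a finite intersection partition of `α` and `β`:
a finite set of terms with pairwise disjoint languages whose union of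
languages equals L(α) ∩ L(β). -/
def IsFIP {V : Type} (P : V → Set (GTerm V)) (Pi : Set (GTerm V)) (α β : GTerm V) : Prop :=
  Pi.Finite ∧
  (∀ π₁ ∈ Pi, ∀ π₂ ∈ Pi, π₁ ≠ π₂ → Lang P π₁ ∩ Lang P π₂ = ∅) ∧
  (⋃ π ∈ Pi, Lang P π) = Lang P α ∩ Lang P β

/-- the template φ = λ(T[⇑(S)]) corresponding to the (Lambda) rewriting rule. -/
def phiLambda (n : Nat) : GTerm (NT n) :=
  .lam (.clos (.var NT.T) (.lift (.var NT.S)))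

/-- `appendS φ i` is the template φ_⟨i⟩, i.e. φ with i copies of [S] appended
to its tail. -/
def appendS {n : Nat} : GTerm (NT n) → Nat → GTerm (NT n)
  | t, 0 => t
  | t, w+1 => .clos (appendS t w) (.var NT.S)

/-- `closList χ [σ_1, …, σ_w]` is the term χ[σ_1]⋯[σ_w]. -/
def closList {V : Type} (t : GTerm V) (l : List (GTerm V)) : GTerm V :=
  l.foldl .clos t

/-- `mkClos a [s_1, …, s_w]` is the λυ-term a[s_1]⋯[s_w]. -/
def mkClos (a : LTerm) (l : List LSub) : LTerm :=
  l.foldl .clos a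

/-!
The first normal-order step of `t = (λa)[s][s_1]⋯[s_w]` fires (Lambda) at the innermost
closure, so `t ↓_{n+1}` iff `t' = λ(a[⇑(s)])[s_1]⋯[s_w] ↓_n`, i.e. iff `t' ∈ L(G_n)`; and
`t ∈ L((λα)[σ][σ_1]⋯[σ_w])` iff `t' ∈ L(λ(α[⇑(σ)])[σ_1]⋯[σ_w])`. Unambiguity of `G_n` singles
out the production `G_n → γ` deriving `t'`, and the partition `Δ_φ(γ)` then singles out the
matching, once we know `t' ∈ L(φ_⟨w_γ⟩)`, i.e. that `γ` has closure width exactly `w`.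
Verbosity rules out a smaller width: the head of `γ` would then be `T`, `S` or `N`, and putting
`0[↑]⋯[↑]` (`n+1` shifts), `↑` or `S(…)` in its place yields a member of `L(G_n)` that needs more
than `n` steps or is not a λυ-term at all. A matching deriving `t'` has the shape
`λ(α[⇑(σ)])[σ_1]⋯[σ_w]` because its language is a nonempty part of `L(φ_⟨w⟩)` and every
non-terminal derives some term rooted at neither `λ`, a closure nor `⇑`.
-/

section Spine
variable {V : Type}

theorem closList_cons (v h : GTerm V) (l : List (GTerm V)) :
    closList v (h :: l) = closList (.clos v h) l := rfl

theorem closList_append_singleton (v : GTerm V) (l : List (GTerm V)) (h : GTerm V) :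
    closList v (l ++ [h]) = .clos (closList v l) h := by
  simp [closList, List.foldl_append]

theorem closWidth_closList (v : GTerm V) (l : List (GTerm V)) :
    closWidth (closList v l) = closWidth v + l.length := by
  induction l using List.reverseRecOn with
  | nil => rfl
  | append_singleton l h ih =>
    rw [closList_append_singleton, closWidth, ih, List.length_append, List.length_singleton,
      Nat.add_assoc]

theorem headOf_ne_clos (v a b : GTerm V) : headOf v ≠ .clos a b := by
  induction v <;> simp_all [headOf]

def closSpine : GTerm V → List (GTerm V)
  | .clos a b => closSpine a ++ [b]
  | _ => []

theorem length_closSpine (v : GTerm V) : (closSpine v).length = closWidth v := by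
  induction v <;> simp_all [closSpine, closWidth]

theorem closList_headOf_closSpine (v : GTerm V) : closList (headOf v) (closSpine v) = v := by
  induction v with
  | clos a b iha _ => rw [closSpine, closList_append_singleton, headOf, iha]
  | _ => rfl

end Spine

theorem appendS_eq_closList {n : Nat} (t : GTerm (NT n)) (w : Nat) :
    appendS t w = closList t (List.replicate w (.var NT.S)) := by
  induction w with
  | zero => rfl
  | succ w ih => rw [List.replicate_succ', closList_append_singleton, ← ih, appendS]

theorem mkClos_append_singleton (a : LTerm) (l : List LSub) (s : LSub) :
    mkClos a (l ++ [s]) = .clos (mkClos a l) s := by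
  simp [mkClos, List.foldl_append]

theorem mkClos_append (a : LTerm) (l₁ l₂ : List LSub) :
    mkClos a (l₁ ++ l₂) = mkClos (mkClos a l₁) l₂ := by
  simp [mkClos, List.foldl_append]

theorem encT_mkClos (a : LTerm) (l : List LSub) :
    encT (mkClos a l) = closList (encT a) (l.map encS) := by
  induction l generalizing a with
  | nil => rfl
  | cons s l ih => exact ih (.clos a s)

mutual
def decT : GTerm Empty → Option LTerm
  | .zero => some (.idx 0)
  | .succ g =>
      match decT g with
      | some (.idx n) => some (.idx (n + 1))
      | _ => none
  | .lam g => (decT g).map .lam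
  | .app g h => do pure (.app (← decT g) (← decT h))
  | .clos g h => do pure (.clos (← decT g) (← decS h))
  | _ => none

def decS : GTerm Empty → Option LSub
  | .slash g => (decT g).map .slash
  | .lift g => (decS g).map .lift
  | .shift => some .shift
  | _ => none
end

theorem decT_encIdx (m : Nat) : decT (encIdx m) = some (.idx m) := by
  induction m with
  | zero => rfl
  | succ m ih => rw [encIdx, decT, ih]

mutual
theorem decT_encT : ∀ t : LTerm, decT (encT t) = some t
  | .idx m => decT_encIdx m
  | .lam a => by rw [encT, decT, decT_encT a]; rfl
  | .app a b => by rw [encT, decT, decT_encT a, decT_encT b]; rfl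
  | .clos a s => by rw [encT, decT, decT_encT a, decS_encS s]; rfl

theorem decS_encS : ∀ s : LSub, decS (encS s) = some s
  | .slash a => by rw [encS, decS, decT_encT a]; rfl
  | .lift s => by rw [encS, decS, decS_encS s]; rfl
  | .shift => rfl
end

theorem encT_injective : Function.Injective encT :=
  Function.LeftInverse.injective (g := fun g => (decT g).getD (.idx 0))
    fun t => by simp only [decT_encT, Option.getD_some]

theorem closList_eq_encT {v : GTerm Empty} {hs : List (GTerm Empty)} {τ : LTerm}
    (h : closList v hs = encT τ) : ∃ x l, encT x = v ∧ τ = mkClos x l := by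
  induction hs using List.reverseRecOn generalizing τ with
  | nil => exact ⟨τ, [], h.symm, rfl⟩
  | append_singleton hs σ ih =>
    rw [closList_append_singleton] at h
    cases τ with
    | idx m => cases m <;> simp [encT, encIdx] at h
    | clos a s =>
      obtain ⟨x, l, hx, rfl⟩ := ih (GTerm.clos.inj h).1
      exact ⟨x, l ++ [s], hx, (mkClos_append_singleton _ _ _).symm⟩
    | _ => simp [encT] at h

theorem encT_ne_shift (x : LTerm) : encT x ≠ .shift := by
  cases x with
  | idx m => cases m <;> simp [encT, encIdx]
  | _ => simp [encT]

theorem encT_ne_succ_clos (x : LTerm) (a b : GTerm Empty) : encT x ≠ .succ (.clos a b) := by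
  cases x with
  | idx m => rcases m with _ | _ | m <;> simp [encT, encIdx]
  | _ => simp [encT]

theorem NStep.not_isPure {t t' : LTerm} (h : NStep t t') : ¬ t.IsPure := by
  induction h with
  | lamCong _ ih => exact ih
  | appLeft _ _ ih => exact fun hp => ih hp.1
  | appRight _ _ _ ih => exact fun hp => ih hp.2
  | _ => exact id

theorem NStep.det {t u v : LTerm} (h₁ : NStep t u) (h₂ : NStep t v) : u = v := by
  induction h₁ generalizing v with
  | lamCong _ ih => cases h₂ with | lamCong h => rw [ih h]
  | appLeft _ h ih =>
    cases h₂ with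
    | appLeft _ h' => rw [ih h']
    | appRight _ hp _ => exact absurd hp h.not_isPure
  | appRight _ hp _ ih =>
    cases h₂ with
    | appLeft _ h' => exact absurd hp h'.not_isPure
    | appRight _ _ h' => rw [ih h']
  | closCong _ hex _ ih =>
    obtain ⟨_, _, rfl⟩ := hex
    cases h₂ with
    | closCong _ _ h' => rw [ih h']
  | _ => cases h₂ <;> first | rfl | (rename_i hex _; obtain ⟨_, _, ⟨⟩⟩ := hex)

theorem not_isPure_mkClos_clos (a : LTerm) (s : LSub) (l : List LSub) :
    ¬ (mkClos (.clos a s) l).IsPure := by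
  induction l generalizing a s with
  | nil => exact id
  | cons s' l ih => exact ih _ _

theorem NStep.mkClos {x x' : LTerm} (hx : ∃ u v, x = .clos u v) (h : NStep x x') (l : List LSub) :
    NStep (mkClos x l) (mkClos x' l) := by
  induction l generalizing x x' with
  | nil => exact h
  | cons s l ih => exact ih ⟨_, _, rfl⟩ (.closCong s hx h)

theorem nstep_lamS_mkClos (a : LTerm) (s : LSub) (l : List LSub) :
    NStep (mkClos (.clos (.lam a) s) l) (mkClos (.lam (.clos a (.lift s))) l) :=
  (NStep.lamS a s).mkClos ⟨_, _, rfl⟩ l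

theorem normIn_succ_iff {t t' : LTerm} (h : NStep t t') {k : Nat} :
    NormIn t (k + 1) ↔ NormIn t' k := by
  refine ⟨fun ht => ?_, .step h⟩
  cases ht with
  | step h' ht' => rwa [h'.det h] at ht'

theorem normIn_mkClos_shifts (j m : Nat) :
    NormIn (mkClos (.idx j) (List.replicate m .shift)) m := by
  induction m generalizing j with
  | zero => exact .base trivial
  | succ m ih => exact .step ((NStep.varShift j).mkClos ⟨_, _, rfl⟩ _) (ih (j + 1))

theorem le_of_normIn_mkClos_shifts {j m K : Nat} {l : List LSub}
    (h : NormIn (mkClos (.idx j) (List.replicate m .shift ++ l)) K) : m ≤ K := by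
  induction m generalizing j K with
  | zero => exact K.zero_le
  | succ m ih =>
    cases K with
    | zero => cases h with | base hp => exact absurd hp (not_isPure_mkClos_clos _ _ _)
    | succ K =>
      have hstep : NStep (mkClos (.idx j) (List.replicate (m + 1) .shift ++ l))
          (mkClos (.idx (j + 1)) (List.replicate m .shift ++ l)) :=
        (NStep.varShift j).mkClos ⟨_, _, rfl⟩ _
      exact Nat.succ_le_succ (ih ((normIn_succ_iff hstep).1 h))

theorem normIn_app_idx_zero {b : LTerm} {k : Nat} (h : NormIn b k) :
    NormIn (.app (.idx 0) b) k := by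
  induction h with
  | base hp => exact .base ⟨trivial, hp⟩
  | step hs _ ih => exact .step (.appRight _ trivial hs) ih

section Generation
variable {V : Type} {P : V → Set (GTerm V)}

theorem gen_lam_iff {α : GTerm V} {a : GTerm Empty} : Gen P (.lam α) (.lam a) ↔ Gen P α a :=
  ⟨fun h => by cases h; assumption, .lam⟩

theorem gen_clos_iff {α σ : GTerm V} {a s : GTerm Empty} :
    Gen P (.clos α σ) (.clos a s) ↔ Gen P α a ∧ Gen P σ s :=
  ⟨fun h => by cases h; constructor <;> assumption, fun h => .clos h.1 h.2⟩

theorem gen_lift_iff {σ : GTerm V} {s : GTerm Empty} : Gen P (.lift σ) (.lift s) ↔ Gen P σ s :=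
  ⟨fun h => by cases h; assumption, .lift⟩

theorem gen_closList {v : GTerm V} {u : GTerm Empty} {l : List (GTerm V)}
    {hs : List (GTerm Empty)} (hf : List.Forall₂ (Gen P) l hs) (h : Gen P v u) :
    Gen P (closList v l) (closList u hs) := by
  induction hf generalizing v u with
  | nil => exact h
  | cons hσ _ ih => exact ih (.clos h hσ)

theorem gen_closList_lam_iff {α : GTerm V} {a : GTerm Empty} {l : List (GTerm V)}
    {hs : List (GTerm Empty)} :
    Gen P (closList (.lam α) l) (closList (.lam a) hs) ↔
      Gen P α a ∧ List.Forall₂ (Gen P) l hs := by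
  refine ⟨fun h => ?_, fun h => gen_closList h.2 (.lam h.1)⟩
  induction l using List.reverseRecOn generalizing hs with
  | nil =>
    rcases List.eq_nil_or_concat' hs with rfl | ⟨hs, σ, rfl⟩
    · exact ⟨gen_lam_iff.1 h, .nil⟩
    · rw [closList_append_singleton] at h; cases h
  | append_singleton l σ ih =>
    rcases List.eq_nil_or_concat' hs with rfl | ⟨hs, s, rfl⟩
    · rw [closList_append_singleton] at h; cases h
    · rw [closList_append_singleton, closList_append_singleton, gen_clos_iff] at h
      obtain ⟨ha, hf⟩ := ih h.1
      exact ⟨ha, List.rel_append hf (.cons h.2 .nil)⟩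

theorem gen_spine {γ : GTerm V} {g : GTerm Empty} (h : Gen P γ g) :
    ∃ u hs, g = closList u hs ∧ Gen P (headOf γ) u ∧ List.Forall₂ (Gen P) (closSpine γ) hs := by
  induction γ generalizing g with
  | clos γ σ ih =>
    cases h with
    | clos h₁ h₂ =>
      obtain ⟨u, hs, rfl, hu, hf⟩ := ih h₁
      exact ⟨u, hs ++ [_], (closList_append_singleton _ _ _).symm, hu,
        List.rel_append hf (.cons h₂ .nil)⟩
  | _ => exact ⟨g, [], rfl, h, .nil⟩

theorem gen_of_gen_headOf {γ : GTerm V} {e : GTerm Empty} {hs : List (GTerm Empty)}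
    (he : Gen P (headOf γ) e) (hf : List.Forall₂ (Gen P) (closSpine γ) hs) :
    Gen P γ (closList e hs) :=
  closList_headOf_closSpine γ ▸ gen_closList hf he

theorem Gen.nonempty_parse {α : GTerm V} {g : GTerm Empty} (h : Gen P α g) :
    Nonempty (Parse P α g) := by
  induction h with
  | var hm _ ih => exact ⟨.var hm ih.some⟩
  | zero => exact ⟨.zero⟩
  | succ _ ih => exact ⟨.succ ih.some⟩
  | lam _ ih => exact ⟨.lam ih.some⟩
  | app _ _ ih₁ ih₂ => exact ⟨.app ih₁.some ih₂.some⟩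
  | clos _ _ ih₁ ih₂ => exact ⟨.clos ih₁.some ih₂.some⟩
  | slash _ ih => exact ⟨.slash ih.some⟩
  | lift _ ih => exact ⟨.lift ih.some⟩
  | shift => exact ⟨.shift⟩

def Parse.rootProd {X : V} {g : GTerm Empty} : Parse P (.var X) g → GTerm V
  | .var (γ := γ) _ _ => γ

theorem Unambiguous.eq_of_gen {X : V} (hX : Unambiguous P X) {γ₁ γ₂ : GTerm V}
    (h₁ : γ₁ ∈ P X) (h₂ : γ₂ ∈ P X) {g : GTerm Empty} (hg₁ : Gen P γ₁ g) (hg₂ : Gen P γ₂ g) :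
    γ₁ = γ₂ :=
  congrArg Parse.rootProd
    ((hX g).allEq (.var h₁ hg₁.nonempty_parse.some) (.var h₂ hg₂.nonempty_parse.some))

theorem IsFIP.mem_inter {Pi : Set (GTerm V)} {α β π : GTerm V} (h : IsFIP P Pi α β)
    (hπ : π ∈ Pi) {g : GTerm Empty} (hg : g ∈ Lang P π) : g ∈ Lang P α ∩ Lang P β :=
  h.2.2 ▸ Set.mem_iUnion₂.2 ⟨π, hπ, hg⟩

theorem IsFIP.eq_of_mem {Pi : Set (GTerm V)} {α β π₁ π₂ : GTerm V} (h : IsFIP P Pi α β)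
    (h₁ : π₁ ∈ Pi) (h₂ : π₂ ∈ Pi) {g : GTerm Empty} (hg₁ : g ∈ Lang P π₁)
    (hg₂ : g ∈ Lang P π₂) : π₁ = π₂ := by
  by_contra hne
  exact (Set.eq_empty_iff_forall_notMem.1 (h.2.1 π₁ h₁ π₂ h₂ hne)) g ⟨hg₁, hg₂⟩

theorem mem_lang_var_iff_existsUnique {X : V} (hX : Unambiguous P X)
    {Δ : GTerm V → Set (GTerm V)} {β : GTerm V → GTerm V}
    (hΔ : ∀ γ ∈ P X, IsFIP P (Δ γ) γ (β γ)) {g : GTerm Empty}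
    (hβ : ∀ γ ∈ P X, g ∈ Lang P γ → g ∈ Lang P (β γ)) :
    g ∈ Lang P (.var X) ↔ ∃! π, π ∈ (⋃ γ ∈ P X, Δ γ) ∧ g ∈ Lang P π := by
  simp only [Set.mem_iUnion₂]
  constructor
  · rintro (⟨hγ, hg⟩ : Gen P (.var X) g)
    have hgβ : g ∈ Lang P _ ∩ Lang P _ := ⟨hg, hβ _ hγ hg⟩
    rw [← (hΔ _ hγ).2.2, Set.mem_iUnion₂] at hgβ
    obtain ⟨π, hπ, hgπ⟩ := hgβ
    refine ⟨π, ⟨⟨_, hγ, hπ⟩, hgπ⟩, ?_⟩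
    rintro π' ⟨⟨γ', hγ', hπ'⟩, hgπ'⟩
    obtain rfl := hX.eq_of_gen hγ' hγ ((hΔ γ' hγ').mem_inter hπ' hgπ').1
      ((hΔ _ hγ).mem_inter hπ hgπ).1
    exact (hΔ γ' hγ').eq_of_mem hπ' hπ hgπ' hgπ
  · rintro ⟨π, ⟨⟨γ, hγ, hπ⟩, hgπ⟩, -⟩
    exact .var hγ ((hΔ γ hγ).mem_inter hπ hgπ).1

theorem exists_eq_lam_of_lang_subset (hw : ∀ X, ∃ e ∈ Lang P (.var X), ∀ a, e ≠ .lam a)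
    {π β : GTerm V} (hne : (Lang P π).Nonempty) (hsub : Lang P π ⊆ Lang P (.lam β)) :
    ∃ π₁, π = .lam π₁ ∧ (Lang P π₁).Nonempty ∧ Lang P π₁ ⊆ Lang P β := by
  obtain ⟨g, hg⟩ := hne
  cases π with
  | var X =>
    obtain ⟨e, he, hlam⟩ := hw X
    cases hsub he
    exact absurd rfl (hlam _)
  | lam π₁ =>
    cases hg with
    | lam hg₁ => exact ⟨π₁, rfl, ⟨_, hg₁⟩, fun u hu => gen_lam_iff.1 (hsub (Gen.lam hu))⟩
  | _ => cases hsub hg; cases hg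

theorem exists_eq_clos_of_lang_subset (hw : ∀ X, ∃ e ∈ Lang P (.var X), ∀ a b, e ≠ .clos a b)
    {π β₁ β₂ : GTerm V} (hne : (Lang P π).Nonempty) (hsub : Lang P π ⊆ Lang P (.clos β₁ β₂)) :
    ∃ π₁ π₂, π = .clos π₁ π₂ ∧ (Lang P π₁).Nonempty ∧ Lang P π₁ ⊆ Lang P β₁ ∧
      (Lang P π₂).Nonempty ∧ Lang P π₂ ⊆ Lang P β₂ := by
  obtain ⟨g, hg⟩ := hne
  cases π with
  | var X =>
    obtain ⟨e, he, hclos⟩ := hw X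
    cases hsub he
    exact absurd rfl (hclos _ _)
  | clos π₁ π₂ =>
    cases hg with
    | clos hg₁ hg₂ =>
      exact ⟨π₁, π₂, rfl, ⟨_, hg₁⟩, fun u hu => (gen_clos_iff.1 (hsub (Gen.clos hu hg₂))).1,
        ⟨_, hg₂⟩, fun u hu => (gen_clos_iff.1 (hsub (Gen.clos hg₁ hu))).2⟩
  | _ => cases hsub hg; cases hg

theorem exists_eq_lift_of_lang_subset (hw : ∀ X, ∃ e ∈ Lang P (.var X), ∀ a, e ≠ .lift a)
    {π β : GTerm V} (hne : (Lang P π).Nonempty) (hsub : Lang P π ⊆ Lang P (.lift β)) :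
    ∃ σ, π = .lift σ := by
  obtain ⟨g, hg⟩ := hne
  cases π with
  | var X =>
    obtain ⟨e, he, hlift⟩ := hw X
    cases hsub he
    exact absurd rfl (hlift _)
  | lift σ => exact ⟨σ, rfl⟩
  | _ => cases hsub hg; cases hg

theorem gen_encT_lamRule_iff {α σ : GTerm V} {σs : List (GTerm V)} {a : LTerm} {s : LSub}
    {ss : List LSub} :
    Gen P (closList (.clos (.lam α) σ) σs) (encT (mkClos (.clos (.lam a) s) ss)) ↔
      Gen P (closList (.lam (.clos α (.lift σ))) σs)
        (encT (mkClos (.lam (.clos a (.lift s))) ss)) := by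
  simp only [encT_mkClos, encT, encS]
  rw [← closList_cons, ← closList_cons, gen_closList_lam_iff, gen_closList_lam_iff,
    List.forall₂_cons, gen_clos_iff, gen_lift_iff, and_assoc]

end Generation

theorem exists_eq_closList_of_lang_subset_appendS {n : Nat} {P : NT n → Set (GTerm (NT n))}
    (hw : ∀ X, ∃ e ∈ Lang P (.var X), (∀ a, e ≠ .lam a) ∧ (∀ a b, e ≠ .clos a b) ∧
      (∀ a, e ≠ .lift a))
    (w : Nat) {π : GTerm (NT n)} (hne : (Lang P π).Nonempty)
    (hsub : Lang P π ⊆ Lang P (appendS (phiLambda n) w)) :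
    ∃ α σ σs, π = closList (.lam (.clos α (.lift σ))) σs := by
  have hlam : ∀ X, ∃ e ∈ Lang P (.var X), ∀ a, e ≠ .lam a :=
    fun X => (hw X).imp fun _ h => ⟨h.1, h.2.1⟩
  have hclos : ∀ X, ∃ e ∈ Lang P (.var X), ∀ a b, e ≠ .clos a b :=
    fun X => (hw X).imp fun _ h => ⟨h.1, h.2.2.1⟩
  have hlift : ∀ X, ∃ e ∈ Lang P (.var X), ∀ a, e ≠ .lift a :=
    fun X => (hw X).imp fun _ h => ⟨h.1, h.2.2.2⟩
  induction w generalizing π with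
  | zero =>
    obtain ⟨π₁, rfl, hne₁, hsub₁⟩ := exists_eq_lam_of_lang_subset hlam hne hsub
    obtain ⟨α, τ, rfl, -, -, hneτ, hsubτ⟩ := exists_eq_clos_of_lang_subset hclos hne₁ hsub₁
    obtain ⟨σ, rfl⟩ := exists_eq_lift_of_lang_subset hlift hneτ hsubτ
    exact ⟨α, σ, [], rfl⟩
  | succ w ih =>
    obtain ⟨π₁, τ, rfl, hne₁, hsub₁, -⟩ := exists_eq_clos_of_lang_subset hclos hne hsub
    obtain ⟨α, σ, σs, rfl⟩ := ih hne₁ hsub₁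
    exact ⟨α, σ, σs ++ [τ], (closList_append_singleton _ _ _).symm⟩

namespace IsRG
variable {n : Nat} {G : RTG (NT n)} (hRG : IsRG n G)
include hRG

theorem gen_var {X : NT n} {γ : GTerm (NT n)} {g : GTerm Empty} (hγ : γ ∈ lamProds X)
    (hg : Gen G.prods γ g) : Gen G.prods (.var X) g :=
  .var (hRG.lambda_sub X hγ) hg

theorem encIdx_mem_N (m : Nat) : Gen G.prods (.var .N) (encIdx m) := by
  induction m with
  | zero => exact hRG.gen_var (by simp [lamProds]) .zero
  | succ m ih => exact hRG.gen_var (by simp [lamProds]) (.succ ih)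

mutual
theorem encT_mem_T : ∀ t : LTerm, Gen G.prods (.var .T) (encT t)
  | .idx m => hRG.gen_var (by simp [lamProds]) (hRG.encIdx_mem_N m)
  | .lam a => hRG.gen_var (by simp [lamProds]) (.lam (encT_mem_T a))
  | .app a b => hRG.gen_var (by simp [lamProds]) (.app (encT_mem_T a) (encT_mem_T b))
  | .clos a s => hRG.gen_var (by simp [lamProds]) (.clos (encT_mem_T a) (encS_mem_S s))

theorem encS_mem_S : ∀ s : LSub, Gen G.prods (.var .S) (encS s)
  | .slash a => hRG.gen_var (by simp [lamProds]) (.slash (encT_mem_T a))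
  | .lift s => hRG.gen_var (by simp [lamProds]) (.lift (encS_mem_S s))
  | .shift => hRG.gen_var (by simp [lamProds]) .shift
end

theorem normIn_iff_mem_lang (t : LTerm) (k : Fin (n + 1)) :
    NormIn t k ↔ encT t ∈ Lang G.prods (.var (.G k)) := by
  rw [hRG.lang k]
  exact ⟨fun h => ⟨t, h, rfl⟩, fun ⟨τ, hτ, he⟩ => encT_injective he ▸ hτ⟩

theorem exists_mem_lang_var (X : NT n) :
    ∃ e ∈ Lang G.prods (.var X),
      (∀ a, e ≠ .lam a) ∧ (∀ a b, e ≠ .clos a b) ∧ (∀ a, e ≠ .lift a) := by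
  cases X with
  | T => exact ⟨.zero, hRG.encT_mem_T (.idx 0), by simp⟩
  | S => exact ⟨.shift, hRG.encS_mem_S .shift, by simp⟩
  | N => exact ⟨.zero, hRG.encIdx_mem_N 0, by simp⟩
  | G k =>
    -- `0 (0[↑]⋯[↑])` with `k` shifts normalises in exactly `k` steps
    refine ⟨encT (.app (.idx 0) (mkClos (.idx 0) (List.replicate k .shift))),
      (hRG.normIn_iff_mem_lang _ k).1 (normIn_app_idx_zero (normIn_mkClos_shifts 0 k)), ?_⟩
    simp [encT]

theorem not_gen_headOf_clos (hVerbose : IsVerbose G) {γ : GTerm (NT n)}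
    (hγ : γ ∈ G.prods (.G (Fin.last n))) {hs : List (GTerm Empty)}
    (hf : List.Forall₂ (Gen G.prods) (closSpine γ) hs) (u₁ u₂ : GTerm Empty) :
    ¬ Gen G.prods (headOf γ) (.clos u₁ u₂) := by
  intro hu
  have hnorm : ∀ e, Gen G.prods (headOf γ) e → ∃ τ, NormIn τ n ∧ encT τ = closList e hs := by
    intro e he
    have hmem : closList e hs ∈ Lang G.prods (.var (.G (Fin.last n))) :=
      .var hγ (gen_of_gen_headOf he hf)
    rw [hRG.lang] at hmem
    obtain ⟨τ, hτ, he⟩ := hmem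
    exact ⟨τ, by rwa [Fin.val_last] at hτ, he⟩
  obtain ⟨X, hX⟩ : ∃ X, headOf γ = .var X := by
    generalize hh : headOf γ = h at hu
    cases hu with
    | var => exact ⟨_, rfl⟩
    | clos => exact absurd hh (headOf_ne_clos _ _ _)
  rw [hX] at hnorm hu
  cases X with
  | G k => exact hVerbose _ γ hγ k hX
  | T =>
    obtain ⟨τ, hτ, he⟩ := hnorm _ (hRG.encT_mem_T (mkClos (.idx 0) (List.replicate (n + 1) .shift)))
    obtain ⟨x, l, hx, rfl⟩ := closList_eq_encT he.symm
    rw [encT_injective hx, ← mkClos_append] at hτ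
    exact absurd (le_of_normIn_mkClos_shifts hτ) (by omega)
  | S =>
    obtain ⟨τ, -, he⟩ := hnorm .shift (hRG.encS_mem_S .shift)
    obtain ⟨x, -, hx, -⟩ := closList_eq_encT he.symm
    exact encT_ne_shift x hx
  | N =>
    obtain ⟨τ, -, he⟩ := hnorm _ (hRG.gen_var (by simp [lamProds]) (.succ hu))
    obtain ⟨x, -, hx, -⟩ := closList_eq_encT he.symm
    exact encT_ne_succ_clos x _ _ hx

theorem closWidth_eq_length (hVerbose : IsVerbose G) {γ : GTerm (NT n)}
    (hγ : γ ∈ G.prods (.G (Fin.last n))) {u : GTerm Empty} (hu : closWidth u = 0)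
    {hs : List (GTerm Empty)} (hg : Gen G.prods γ (closList u hs)) :
    closWidth γ = hs.length := by
  obtain ⟨u', hs', he, hu', hf⟩ := gen_spine hg
  have hw := congrArg closWidth he
  rw [closWidth_closList, closWidth_closList, hu] at hw
  have hlen : hs'.length = closWidth γ := by rw [← hf.length_eq, length_closSpine]
  cases u' with
  | clos u₁ u₂ => exact absurd hu' (hRG.not_gen_headOf_clos hVerbose hγ hf u₁ u₂)
  | _ => simp only [closWidth] at hw; omega

theorem encT_mem_lang_appendS (a : LTerm) (s : LSub) (ss : List LSub) :
    encT (mkClos (.lam (.clos a (.lift s))) ss) ∈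
      Lang G.prods (appendS (phiLambda n) ss.length) := by
  rw [encT_mkClos, appendS_eq_closList]
  refine gen_closList ?_ (.lam (.clos (hRG.encT_mem_T a) (.lift (hRG.encS_mem_S s))))
  induction ss with
  | nil => exact .nil
  | cons s' ss ih => exact .cons (hRG.encS_mem_S s') ih

end IsRG

/-- Let 𝒢_n be a simple, verbose ψ-reduction grammar, φ = λ(T[⇑(S)]) the
template of the (Lambda) rewriting rule, and Δ_φ^n the set of φ-matchings of
𝒢_n, where the φ-matchings of the right-hand side γ (of closure width w) of a
production G_n → γ form a finite intersection partition Π(γ, φ_⟨w⟩). Then a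
λυ-term t = (λa)[s][s_1]⋯[s_w] satisfies t ↓_{n+1} if and only if there is a
unique π = (λ(α[⇑(σ)]))[σ_1]⋯[σ_w] in Δ_φ^n with t ∈ L((λα)[σ][σ_1]⋯[σ_w]). -/
theorem lambda_rule_productions (n : Nat) (G : RTG (NT n))
    (hRG : IsRG n G) (hSimple : IsSimple n G) (hVerbose : IsVerbose G)
    (Δ : GTerm (NT n) → Set (GTerm (NT n)))
    (hΔ : ∀ γ ∈ G.prods (NT.G (Fin.last n)),
      IsFIP G.prods (Δ γ) γ (appendS (phiLambda n) (closWidth γ)))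
    (a : LTerm) (s : LSub) (ss : List LSub) :
    NormIn (mkClos (.clos (.lam a) s) ss) (n+1) ↔
      ∃! π : GTerm (NT n),
        (π ∈ ⋃ γ ∈ G.prods (NT.G (Fin.last n)), Δ γ) ∧
        ∃ (α σ : GTerm (NT n)) (σs : List (GTerm (NT n))),
          π = closList (.lam (.clos α (.lift σ))) σs ∧
          encT (mkClos (.clos (.lam a) s) ss) ∈
            Lang G.prods (closList (.clos (.lam α) σ) σs) := by
  set t₁ := mkClos (.lam (.clos a (.lift s))) ss
  have hnorm := hRG.normIn_iff_mem_lang t₁ (Fin.last n)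
  rw [Fin.val_last] at hnorm
  have hφ : ∀ γ ∈ G.prods (.G (Fin.last n)), encT t₁ ∈ Lang G.prods γ →
      encT t₁ ∈ Lang G.prods (appendS (phiLambda n) (closWidth γ)) := by
    intro γ hγ hg
    rw [encT_mkClos] at hg
    rw [hRG.closWidth_eq_length hVerbose hγ rfl hg, List.length_map]
    exact hRG.encT_mem_lang_appendS a s ss
  rw [normIn_succ_iff (nstep_lamS_mkClos a s ss), hnorm,
    mem_lang_var_iff_existsUnique (hRG.unamb _) hΔ hφ]
  refine existsUnique_congr fun π => ⟨fun ⟨hπ, hg⟩ => ?_, ?_⟩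
  · obtain ⟨γ, hγ, hπγ⟩ := Set.mem_iUnion₂.1 hπ
    obtain ⟨α, σ, σs, rfl⟩ := exists_eq_closList_of_lang_subset_appendS
      hRG.exists_mem_lang_var _ ⟨_, hg⟩ fun g hg => ((hΔ γ hγ).mem_inter hπγ hg).2
    exact ⟨hπ, α, σ, σs, rfl, gen_encT_lamRule_iff.2 hg⟩
  · rintro ⟨hπ, α, σ, σs, rfl, hg⟩
    exact ⟨hπ, gen_encT_lamRule_iff.1 hg⟩
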